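/- arXiv:2303.02739 — 2 statements merged into one kernel-verified Lean document; each statement's English description precedes it below -/
import Mathlib

section
/- Let G be a path-bipartite graph of sets A and B, and let G(A,B)-quotient be the bipartite graph 𝐆 whose vertices are the connected components of G[A] together with the connected components of G[B], where a component Aⁱ of G[A] is adjacent to a component Bʲ of G[B] iff some a ∈ V(Aⁱ) and b ∈ V(Bʲ) are joined by a be-path of A and B in G. Then G is path-complete (i.e., every pair (a,b) ∈ A × B is joined by a be-path of A and B in G) if and only if 𝐆 is complete bipartite. -/
open SimpleGraph Set

/-- A "graph on a vertex subset": a subgraph of the complete graph on `V`. -/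
abbrev Gr (V : Type) := SimpleGraph.Subgraph (⊤ : SimpleGraph V)

/-- `P` is the path graph `(u₀, …, u_k)` whose vertex list is `l`. -/
def IsPathGraphOn {V : Type} (l : List V) (P : Gr V) : Prop :=
  l.Nodup ∧ 2 ≤ l.length ∧ P.verts = {v | v ∈ l} ∧
    ∀ x y, P.Adj x y ↔ ([x, y] <:+: l ∨ [y, x] <:+: l)

/-- `P` is a path graph. -/
def IsPathGraph {V : Type} (P : Gr V) : Prop := ∃ l, IsPathGraphOn l P

/-- `P` is a path joining `a` and `b`. -/
def IsPathFrom {V : Type} (P : Gr V) (a b : V) : Prop :=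
  ∃ l, IsPathGraphOn l P ∧
    ((l.head? = some a ∧ l.getLast? = some b) ∨ (l.head? = some b ∧ l.getLast? = some a))

/-- `P` is a be-path of `A` and `B`: a path with vertices in `A ∪ B` having a unique
edge `{a₀, b₀}` meeting both `A` and `B`. -/
def IsBePath {V : Type} (A B : Set V) (P : Gr V) : Prop :=
  IsPathGraph P ∧ P.verts ⊆ A ∪ B ∧
    ∃ a₀ b₀, a₀ ∈ A ∧ b₀ ∈ B ∧ P.Adj a₀ b₀ ∧
      ∀ x y, P.Adj x y → x ∈ A → y ∈ B → x = a₀ ∧ y = b₀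

/-- `G` is a path-bipartite graph of `A` and `B`: `A`, `B` are disjoint nonempty subsets of
`V(G)` and `G` is the union of a nonempty family of be-paths of `A` and `B`. -/
def IsPathBipartite {V : Type} (A B : Set V) (G : Gr V) : Prop :=
  A.Nonempty ∧ B.Nonempty ∧ Disjoint A B ∧ A ⊆ G.verts ∧ B ⊆ G.verts ∧
    ∃ Ps : Set (Gr V), Ps.Nonempty ∧ (∀ P ∈ Ps, IsBePath A B P) ∧ G = sSup Ps

/-- `G` is connected: any two distinct vertices are joined by a path in `G`. -/
def ConnectedGr {V : Type} (G : Gr V) : Prop :=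
  ∀ u v, u ∈ G.verts → v ∈ G.verts → u ≠ v → ∃ P, P ≤ G ∧ IsPathFrom P u v

/-- `H` is a connected component of `G`: a maximal connected subgraph. -/
def IsComponent {V : Type} (G H : Gr V) : Prop :=
  H ≤ G ∧ ConnectedGr H ∧ ∀ Γ, Γ ≤ G → ConnectedGr Γ → H ≤ Γ → H = Γ

/-- Some `a ∈ A` and `b ∈ B` are joined by a be-path of `A` and `B` contained in `G`,
i.e. `(a, b) ∈ 𝓑_path(G)`. -/
def BePathJoined {V : Type} (G : Gr V) (A B : Set V) (a b : V) : Prop :=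
  ∃ P, P ≤ G ∧ IsBePath A B P ∧ IsPathFrom P a b

/-- `G` is path-complete: every `(a,b) ∈ A × B` is joined by a be-path in `G`. -/
def PathComplete {V : Type} (G : Gr V) (A B : Set V) : Prop :=
  ∀ a ∈ A, ∀ b ∈ B, BePathJoined G A B a b

/-- The induced-bipartite subgraph `G[A, B]`. -/
def induceBip {V : Type} (G : Gr V) (A B : Set V) : Gr V where
  verts := A ∪ B
  Adj x y := G.Adj x y ∧ ((x ∈ A ∧ y ∈ B) ∨ (x ∈ B ∧ y ∈ A))
  adj_sub h := G.adj_sub h.1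
  edge_vert h := h.2.elim (fun hh => Or.inl hh.1) (fun hh => Or.inr hh.1)
  symm := ⟨fun x y h => ⟨h.1.symm, h.2.elim (fun hh => Or.inr ⟨hh.2, hh.1⟩) (fun hh => Or.inl ⟨hh.2, hh.1⟩)⟩⟩

/-- `d` is a semimetric. -/
def IsSemimetric {X : Type} (d : X → X → ℝ) : Prop :=
  (∀ x y, 0 ≤ d x y) ∧ (∀ x y, d x y = d y x) ∧ ∀ x y, d x y = 0 ↔ x = y

/-- `d` is a metric. -/
def IsMetric {X : Type} (d : X → X → ℝ) : Prop :=
  IsSemimetric d ∧ ∀ x y z, d x y ≤ d x z + d z y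

/-- `d` is an ultrametric. -/
def IsUltrametric {X : Type} (d : X → X → ℝ) : Prop :=
  IsSemimetric d ∧ ∀ x y z, d x y ≤ max (d x z) (d z y)

/-- `dist(A, B) = inf{d(a,b) : a ∈ A, b ∈ B}`. -/
noncomputable def setDist {X : Type} (d : X → X → ℝ) (A B : Set X) : ℝ :=
  sInf {r | ∃ a ∈ A, ∃ b ∈ B, d a b = r}

/-- `A` is a proximinal subset: every point has a best approximation in `A`. -/
def ProximinalSet {X : Type} (d : X → X → ℝ) (A : Set X) : Prop :=
  ∀ x, ∃ a₀ ∈ A, d x a₀ = setDist d {x} A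

/-- `G` is path-proximinal for `A` and `B` w.r.t. the semimetric `d` on `X = A ∪ B`. -/
def IsPathProximinal {X : Type} (d : X → X → ℝ) (A B : Set X) (G : Gr X) : Prop :=
  IsPathBipartite A B G ∧ ProximinalSet d A ∧ ProximinalSet d B ∧
    ∀ x ∈ A ∪ B, ∀ y ∈ A ∪ B, x ≠ y → (G.Adj x y ↔ d x y ≤ setDist d A B)

/-- `G` is a proximinal bipartite graph with parts `A` and `B` for `(X, d)`. -/
def IsProximinalGraph {X : Type} (d : X → X → ℝ) (A B : Set X) (G : Gr X) : Prop :=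
  A.Nonempty ∧ B.Nonempty ∧ Disjoint A B ∧ G.verts = A ∪ B ∧
    (∀ x y, G.Adj x y → (x ∈ A ∧ y ∈ B) ∨ (x ∈ B ∧ y ∈ A)) ∧
    ProximinalSet d A ∧ ProximinalSet d B ∧
    ∀ a ∈ A, ∀ b ∈ B, (G.Adj a b ↔ d a b = setDist d A B)

variable {V : Type}

lemma chain'_of_pair_infix {R : V → V → Prop} :
    ∀ l : List V, (∀ x y, [x, y] <:+: l → R x y) → l.Chain' R
  | [], _ => List.isChain_nil
  | [_], _ => List.isChain_singleton _
  | x :: y :: t, h => by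
    unfold List.Chain'
    rw [List.isChain_cons_cons]
    refine ⟨h x y ⟨[], t, rfl⟩, chain'_of_pair_infix (y :: t) fun a b hab => h a b ?_⟩
    exact hab.trans (List.suffix_cons x (y :: t)).isInfix

lemma pair_infix_chain' {R : V → V → Prop} {l : List V} (h : l.Chain' R) {x y : V}
    (hxy : [x, y] <:+: l) : R x y :=
  List.isChain_pair.mp (h.infix hxy)

lemma pathOfList (H : Gr V) (l : List V) (hn : l.Nodup) (hl : 2 ≤ l.length)
    (hv : ∀ x ∈ l, x ∈ H.verts) (hc : l.Chain' H.Adj) :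
    ∃ P : Gr V, P ≤ H ∧ IsPathGraphOn l P := by
  refine ⟨⟨{v | v ∈ l}, fun x y => [x, y] <:+: l ∨ [y, x] <:+: l, ?_, ?_, ?_⟩, ⟨?_, ?_⟩,
    hn, hl, rfl, fun x y => Iff.rfl⟩
  · rintro x y (h | h) <;>
    · simp only [top_adj]
      rintro rfl
      have := (h.sublist).nodup hn
      simp at this
  · rintro x y (h | h)
    · exact h.subset (by simp)
    · exact h.subset (by simp)
  · constructor
    rintro x y (h | h)
    · exact Or.inr h
    · exact Or.inl h
  · exact fun v hv' => hv v hv'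
  · rintro x y (h | h)
    · exact pair_infix_chain' hc h
    · exact (pair_infix_chain' hc h).symm

lemma reach_of_chain (G' : SimpleGraph V) :
    ∀ l : List V, l.Chain' G'.Adj → ∀ u v, l.head? = some u → l.getLast? = some v →
      G'.Reachable u v
  | [], _, u, v, hu, _ => by simp at hu
  | [x], _, u, v, hu, hv => by
    simp only [List.head?_cons, Option.some.injEq] at hu
    simp only [List.getLast?_singleton, Option.some.injEq] at hv
    exact hu ▸ hv ▸ Reachable.refl x
  | x :: y :: t, hc, u, v, hu, hv => by
    simp only [List.head?_cons, Option.some.injEq] at hu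
    unfold List.Chain' at hc
    rw [List.isChain_cons_cons] at hc
    have := reach_of_chain G' (y :: t) hc.2 y v rfl (by simpa using hv)
    exact hu ▸ (hc.1.reachable.trans this)

lemma walk_support_mem (H : Gr V) :
    ∀ {u v : V} (w : H.spanningCoe.Walk u v), u ∈ H.verts → ∀ x ∈ w.support, x ∈ H.verts
  | u, _, SimpleGraph.Walk.nil, hu, x, hx => by
    rw [SimpleGraph.Walk.support_nil, List.mem_singleton] at hx; exact hx ▸ hu
  | u, v, SimpleGraph.Walk.cons h w, hu, x, hx => by
    rw [SimpleGraph.Walk.support_cons] at hx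
    rcases List.mem_cons.mp hx with rfl | hx
    · exact hu
    · exact walk_support_mem H w (Subgraph.Adj.snd_mem h) x hx

lemma support_list_of_reachable (H : Gr V) {u v : V} (hu : u ∈ H.verts)
    (h : H.spanningCoe.Reachable u v) :
    ∃ l : List V, l.Nodup ∧ l.Chain' H.Adj ∧ l.head? = some u ∧ l.getLast? = some v ∧
      ∀ x ∈ l, x ∈ H.verts := by
  classical
  obtain ⟨w⟩ := h
  refine ⟨(w.toPath : H.spanningCoe.Walk u v).support, (w.toPath).2.support_nodup,
    SimpleGraph.Walk.isChain_adj_support (w.toPath : H.spanningCoe.Walk u v), ?_, ?_, walk_support_mem H _ hu⟩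
  · rw [SimpleGraph.Walk.support_eq_cons]; rfl
  · rw [List.getLast?_eq_getLast (SimpleGraph.Walk.support_ne_nil _), SimpleGraph.Walk.getLast_support]



lemma two_le_length {l : List V} {u v : V} (hu : l.head? = some u)
    (hv : l.getLast? = some v) (huv : u ≠ v) : 2 ≤ l.length := by
  rcases l with _ | ⟨x, _ | ⟨y, t⟩⟩
  · simp at hu
  · simp only [List.head?_cons, Option.some.injEq] at hu
    simp only [List.getLast?_singleton, Option.some.injEq] at hv
    subst hu; subst hv; exact absurd rfl huv
  · simp only [List.length_cons]; omega

lemma reach_of_pathFrom {H P : Gr V} {u v : V} (hPH : P ≤ H) (h : IsPathFrom P u v) :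
    H.spanningCoe.Reachable u v := by
  obtain ⟨l, ⟨hn, hl, hverts, hadj⟩, hends⟩ := h
  have hc : l.Chain' H.Adj := chain'_of_pair_infix l fun x y hxy =>
    hPH.2 ((hadj x y).mpr (Or.inl hxy))
  rcases hends with ⟨h1, h2⟩ | ⟨h1, h2⟩
  · exact reach_of_chain H.spanningCoe l hc u v h1 h2
  · exact (reach_of_chain H.spanningCoe l hc v u h1 h2).symm

lemma exists_component (H : Gr V) {a : V} (ha : a ∈ H.verts) :
    ∃ C : Gr V, IsComponent H C ∧
      C.verts = {v | v ∈ H.verts ∧ H.spanningCoe.Reachable a v} := by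
  classical
  set S : Set V := {v | v ∈ H.verts ∧ H.spanningCoe.Reachable a v} with hS
  have hSsub : S ⊆ H.verts := fun v hv => hv.1
  refine ⟨H.induce S, ⟨⟨hSsub, fun x y h => h.2.2⟩, ?_, ?_⟩, rfl⟩
  · -- connected
    intro u v hu hv huv
    obtain ⟨w⟩ : H.spanningCoe.Reachable u v := hu.2.symm.trans hv.2
    set l := (w.toPath : H.spanningCoe.Walk u v).support with hl
    have hmem : ∀ x ∈ l, x ∈ S := by
      intro x hx
      refine ⟨walk_support_mem H _ hu.1 x hx, hu.2.trans ⟨(w.toPath : H.spanningCoe.Walk u v).takeUntil x hx⟩⟩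
    have hchain : l.Chain' H.Adj := SimpleGraph.Walk.isChain_adj_support (w.toPath : H.spanningCoe.Walk u v)
    have hchain' : l.Chain' (H.induce S).Adj := by
      refine chain'_of_pair_infix l fun x y hxy => ?_
      exact ⟨hmem x (hxy.subset (by simp)), hmem y (hxy.subset (by simp)),
        pair_infix_chain' hchain hxy⟩
    have hhead : l.head? = some u := by rw [hl, SimpleGraph.Walk.support_eq_cons]; rfl
    have hlast : l.getLast? = some v := by
      rw [hl, List.getLast?_eq_getLast (SimpleGraph.Walk.support_ne_nil _), SimpleGraph.Walk.getLast_support]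
    have hlen : 2 ≤ l.length := two_le_length hhead hlast huv
    obtain ⟨P, hP, hPl⟩ := pathOfList (H.induce S) l
      w.toPath.2.support_nodup hlen
      (fun x hx => hmem x hx) hchain'
    exact ⟨P, hP, l, hPl, Or.inl ⟨hhead, hlast⟩⟩
  · -- maximal
    intro Γ hΓH hΓc hCΓ
    have haS : a ∈ S := ⟨ha, Reachable.refl a⟩
    have hvertsub : Γ.verts ⊆ S := by
      intro v hv
      by_cases hva : v = a
      · exact hva ▸ haS
      · obtain ⟨P, hPΓ, hPf⟩ := hΓc a v (hCΓ.1 haS) hv (Ne.symm hva)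
        exact ⟨hΓH.1 hv, reach_of_pathFrom (hPΓ.trans hΓH) hPf⟩
    refine le_antisymm hCΓ ⟨hvertsub, fun x y h => ?_⟩
    exact ⟨hvertsub (Subgraph.Adj.fst_mem h), hvertsub (Subgraph.Adj.snd_mem h), hΓH.2 h⟩

lemma pathGraphOn_reverse {l : List V} {P : Gr V} (h : IsPathGraphOn l P) :
    IsPathGraphOn l.reverse P := by
  obtain ⟨hn, hl, hv, ha⟩ := h
  refine ⟨List.nodup_reverse.mpr hn, by simpa using hl, by simpa [Set.ext_iff] using fun v => hv ▸ Iff.rfl, ?_⟩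
  intro x y
  rw [ha x y]
  constructor
  · rintro (h | h)
    · exact Or.inr (by simpa using List.reverse_infix.mpr h)
    · exact Or.inl (by simpa using List.reverse_infix.mpr h)
  · rintro (h | h)
    · right
      have := List.reverse_infix.mpr h
      simpa using this
    · left
      have := List.reverse_infix.mpr h
      simpa using this

lemma pair_infix_append {x y : V} :
    ∀ l₁ l₂ : List V, [x, y] <:+: l₁ ++ l₂ →
      [x, y] <:+: l₁ ∨ [x, y] <:+: l₂ ∨ (l₁.getLast? = some x ∧ l₂.head? = some y)
  | [], l₂, h => Or.inr (Or.inl (by simpa using h))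
  | z :: l₁, l₂, h => by
    rw [List.cons_append, List.infix_cons_iff] at h
    rcases h with h | h
    · -- [x,y] <+: z :: (l₁ ++ l₂)
      obtain ⟨t, ht⟩ := h
      simp only [List.cons_append, List.cons.injEq] at ht
      obtain ⟨rfl, ht⟩ := ht
      rcases l₁ with _ | ⟨w, l₁'⟩
      · -- l₁ = [z] = [x], so y :: t = l₂
        refine Or.inr (Or.inr ⟨rfl, ?_⟩)
        simp only [List.nil_append] at ht
        rw [← ht]; rfl
      · simp only [List.cons_append, List.cons.injEq] at ht
        obtain ⟨rfl, -⟩ := ht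
        exact Or.inl ⟨[], l₁', rfl⟩
    · rcases pair_infix_append l₁ l₂ h with h' | h' | ⟨h1, h2⟩
      · exact Or.inl (h'.trans (List.suffix_cons z l₁).isInfix)
      · exact Or.inr (Or.inl h')
      · refine Or.inr (Or.inr ⟨?_, h2⟩)
        rcases l₁ with _ | ⟨w, l₁'⟩
        · simp at h1
        · rw [List.getLast?_cons_cons]; exact h1


section Split

variable {A B : Set V} {P : Gr V} {a₀ b₀ : V}

lemma tail_in_B (hd : Disjoint A B)
    (huniq : ∀ x y, P.Adj x y → x ∈ A → y ∈ B → x = a₀ ∧ y = b₀) :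
    ∀ l : List V, l.Chain' P.Adj → (∀ x ∈ l, x ∈ A ∪ B) →
      (∀ y, l.head? = some y → y ∈ B) → a₀ ∉ l → ∀ x ∈ l, x ∈ B
  | [], _, _, _, _, x, hx => by simp at hx
  | [y], _, _, hh, _, x, hx => by
    rw [List.mem_singleton] at hx
    exact hx ▸ hh y rfl
  | y :: z :: t, hc, hAB, hh, ha, x, hx => by
    unfold List.Chain' at hc
    rw [List.isChain_cons_cons] at hc
    have hyB : y ∈ B := hh y rfl
    have hzB : z ∈ B := by
      rcases hAB z (by simp) with hz | hz
      · exfalso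
        obtain ⟨rfl, -⟩ := huniq z y hc.1.symm hz hyB
        exact ha (by simp)
      · exact hz
    rcases List.mem_cons.mp hx with rfl | hx
    · exact hyB
    · exact tail_in_B hd huniq (z :: t) hc.2 (fun w hw => hAB w (List.mem_cons_of_mem y hw))
        (fun w hw => by rw [List.head?_cons, Option.some.injEq] at hw; exact hw ▸ hzB)
        (fun hmem => ha (List.mem_cons_of_mem y hmem)) x hx

lemma split_list (hd : Disjoint A B)
    (huniq : ∀ x y, P.Adj x y → x ∈ A → y ∈ B → x = a₀ ∧ y = b₀) :
    ∀ l : List V, l.Nodup → l.Chain' P.Adj → (∀ x ∈ l, x ∈ A ∪ B) →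
      ∀ u v, l.head? = some u → l.getLast? = some v → u ∈ A → v ∈ B →
      ∃ lA lB : List V, l = lA ++ lB ∧ (∀ x ∈ lA, x ∈ A) ∧ (∀ x ∈ lB, x ∈ B) ∧
        lA.getLast? = some a₀ ∧ lB.head? = some b₀
  | [], _, _, _, u, v, hu, hv, _, _ => by simp at hu
  | [w], _, _, _, u, v, hu, hv, huA, hvB => by
    simp only [List.head?_cons, Option.some.injEq] at hu
    simp only [List.getLast?_singleton, Option.some.injEq] at hv
    exact absurd (hu ▸ huA) (Set.disjoint_right.mp hd (hv ▸ hvB))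
  | u' :: w :: t, hn, hc, hAB, u, v, hu, hv, huA, hvB => by
    simp only [List.head?_cons, Option.some.injEq] at hu
    subst hu
    unfold List.Chain' at hc
    rw [List.isChain_cons_cons] at hc
    rcases hAB w (by simp) with hwA | hwB
    · -- recurse on w :: t
      obtain ⟨lA, lB, heq, h1, h2, h3, h4⟩ := split_list hd huniq (w :: t) hn.of_cons hc.2
        (fun x hx => hAB x (List.mem_cons_of_mem u' hx)) w v rfl (by simpa using hv) hwA hvB
      have hlAne : lA ≠ [] := by rintro rfl; simp at h3
      refine ⟨u' :: lA, lB, by rw [List.cons_append, heq], ?_, h2, ?_, h4⟩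
      · rintro x hx
        rcases List.mem_cons.mp hx with rfl | hx
        · exact huA
        · exact h1 x hx
      · rcases lA with _ | ⟨p, lA'⟩
        · exact absurd rfl hlAne
        · rw [List.getLast?_cons_cons]; exact h3
    · -- crossing edge here
      obtain ⟨rfl, rfl⟩ := huniq u' w hc.1 huA hwB
      refine ⟨[u'], w :: t, rfl, by simpa using huA, ?_, rfl, rfl⟩
      have : u' ∉ w :: t := by
        have := hn
        rw [List.nodup_cons] at this
        exact this.1
      exact tail_in_B hd huniq (w :: t) hc.2
        (fun x hx => hAB x (List.mem_cons_of_mem u' hx))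
        (fun y hy => by rw [List.head?_cons, Option.some.injEq] at hy; exact hy ▸ hwB) this

end Split

lemma bepath_reach {G : Gr V} {A B : Set V} (hd : Disjoint A B) {P : Gr V} (hP : P ≤ G)
    (hbe : IsBePath A B P) {a' b' : V} (hab : IsPathFrom P a' b') (ha' : a' ∈ A) (hb' : b' ∈ B) :
    ∃ a₀ b₀, a₀ ∈ A ∧ b₀ ∈ B ∧ G.Adj a₀ b₀ ∧
      (G.induce A).spanningCoe.Reachable a' a₀ ∧
      (G.induce B).spanningCoe.Reachable b₀ b' := by
  obtain ⟨-, hsub, a₀, b₀, ha₀, hb₀, hadj₀, huniq⟩ := hbe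
  obtain ⟨l₀, hpg₀, hends₀⟩ := hab
  -- normalize orientation
  obtain ⟨m, hpg, hhead, hlast⟩ :
      ∃ m, IsPathGraphOn m P ∧ m.head? = some a' ∧ m.getLast? = some b' := by
    rcases hends₀ with ⟨h1, h2⟩ | ⟨h1, h2⟩
    · exact ⟨l₀, hpg₀, h1, h2⟩
    · exact ⟨l₀.reverse, pathGraphOn_reverse hpg₀,
        by rw [List.head?_reverse]; exact h2, by rw [List.getLast?_reverse]; exact h1⟩
  obtain ⟨hn, hlen, hverts, hadj⟩ := hpg
  have hchain : m.Chain' P.Adj := chain'_of_pair_infix m fun x y h => (hadj x y).mpr (Or.inl h)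
  have hAB : ∀ x ∈ m, x ∈ A ∪ B := fun x hx => hsub (hverts ▸ hx)
  obtain ⟨lA, lB, heq, h1, h2, h3, h4⟩ :=
    split_list hd huniq m hn hchain hAB a' b' hhead hlast ha' hb'
  have hlAne : lA ≠ [] := by rintro rfl; simp at h3
  have hlBne : lB ≠ [] := by rintro rfl; simp at h4
  subst heq
  have hheadA : lA.head? = some a' := by rwa [List.head?_append_of_ne_nil lA hlAne] at hhead
  have hlastB : lB.getLast? = some b' := by rwa [List.getLast?_append_of_ne_nil lA hlBne] at hlast
  have hchA : lA.Chain' (G.induce A).Adj := by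
    refine chain'_of_pair_infix lA fun x y h => ?_
    exact ⟨h1 x (h.subset (by simp)), h1 y (h.subset (by simp)),
      hP.2 (pair_infix_chain' (hchain.prefix (List.prefix_append lA lB)) h)⟩
  have hchB : lB.Chain' (G.induce B).Adj := by
    refine chain'_of_pair_infix lB fun x y h => ?_
    exact ⟨h2 x (h.subset (by simp)), h2 y (h.subset (by simp)),
      hP.2 (pair_infix_chain' (hchain.suffix (List.suffix_append lA lB)) h)⟩
  exact ⟨a₀, b₀, ha₀, hb₀, hP.2 hadj₀,
    reach_of_chain _ lA hchA a' a₀ hheadA h3,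
    reach_of_chain _ lB hchB b₀ b' h4 hlastB⟩

lemma comp_nonempty {V : Type} {S : Set V} {G : Gr V} (hS : S.Nonempty) {C : Gr V}
    (hC : IsComponent (G.induce S) C) : C.verts.Nonempty := by
  obtain ⟨a₁, ha₁⟩ := hS
  by_contra hcon
  rw [Set.not_nonempty_iff_eq_empty] at hcon
  set Γ : Gr V := ⟨{a₁}, fun _ _ => False, fun h => h.elim, fun h => h.elim,
    ⟨fun _ _ h => h.elim⟩⟩ with hΓ
  have hΓle : Γ ≤ G.induce S := ⟨by simpa [hΓ] using ha₁, fun x y h => h.elim⟩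
  have hΓc : ConnectedGr Γ := by
    intro u v hu hv huv
    simp only [hΓ, Set.mem_singleton_iff] at hu hv
    exact absurd (hu.trans hv.symm) huv
  have hCΓ : C ≤ Γ := ⟨by rw [hcon]; exact Set.empty_subset _,
    fun x y h => absurd (C.edge_vert h) (by rw [hcon]; exact Set.notMem_empty x)⟩
  have := hC.2.2 Γ hΓle hΓc hCΓ
  rw [this, hΓ] at hcon
  exact absurd hcon (by simp)

theorem stmt6 {V : Type} (G : Gr V) (A B : Set V) (hG : IsPathBipartite A B G) :
    PathComplete G A B ↔
      ∀ Ai Bj : Gr V, IsComponent (G.induce A) Ai → IsComponent (G.induce B) Bj →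
        ∃ a ∈ Ai.verts, ∃ b ∈ Bj.verts, BePathJoined G A B a b := by
  obtain ⟨hA, hB, hd, hAG, hBG, -⟩ := hG
  constructor
  · intro hpc Ai Bj hAi hBj
    have hAine : Ai.verts.Nonempty := comp_nonempty hA hAi
    have hBjne : Bj.verts.Nonempty := comp_nonempty hB hBj
    obtain ⟨a, haAi⟩ := hAine
    obtain ⟨b, hbBj⟩ := hBjne
    exact ⟨a, haAi, b, hbBj, hpc a (hAi.1.1 haAi) b (hBj.1.1 hbBj)⟩
  · intro h a ha b hb
    obtain ⟨Ca, hCa, hCav⟩ := exists_component (G.induce A) (show a ∈ A from ha)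
    obtain ⟨Cb, hCb, hCbv⟩ := exists_component (G.induce B) (show b ∈ B from hb)
    obtain ⟨a', ha'm, b', hb'm, P, hP, hbe, hpf⟩ := h Ca Cb hCa hCb
    rw [hCav] at ha'm
    rw [hCbv] at hb'm
    obtain ⟨a₀, b₀, ha₀, hb₀, hadj₀, hra, hrb⟩ := bepath_reach hd hP hbe hpf ha'm.1 hb'm.1
    have hra' : (G.induce A).spanningCoe.Reachable a a₀ := ha'm.2.trans hra
    have hrb' : (G.induce B).spanningCoe.Reachable b₀ b := hrb.trans hb'm.2.symm
    obtain ⟨mA, hnA, hcA, hhA, hlA, hmA⟩ :=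
      support_list_of_reachable (G.induce A) (show a ∈ A from ha) hra'
    obtain ⟨mB, hnB, hcB, hhB, hlB, hmB⟩ :=
      support_list_of_reachable (G.induce B) (show b₀ ∈ B from hb₀) hrb'
    have hmA' : ∀ x ∈ mA, x ∈ A := hmA
    have hmB' : ∀ x ∈ mB, x ∈ B := hmB
    have hmAne : mA ≠ [] := by rintro rfl; simp at hhA
    have hmBne : mB ≠ [] := by rintro rfl; simp at hhB
    have hnodup : (mA ++ mB).Nodup := by
      refine hnA.append hnB fun x hxA hxB => ?_
      exact Set.disjoint_left.mp hd (hmA' x hxA) (hmB' x hxB)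
    have hchain : (mA ++ mB).Chain' G.Adj := by
      unfold List.Chain'
      rw [List.isChain_append]
      refine ⟨hcA.imp fun _ _ h => h.2.2, hcB.imp fun _ _ h => h.2.2, ?_⟩
      intro x hx y hy
      simp only [Option.mem_def, hlA, hhB, Option.some.injEq] at hx hy
      subst hx; subst hy
      exact hadj₀
    have hlen : 2 ≤ (mA ++ mB).length := by
      rw [List.length_append]
      have h1 := List.length_pos_iff.mpr hmAne
      have h2 := List.length_pos_iff.mpr hmBne
      omega
    have hvrt : ∀ x ∈ mA ++ mB, x ∈ G.verts := by
      intro x hx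
      rcases List.mem_append.mp hx with hx | hx
      · exact hAG (hmA' x hx)
      · exact hBG (hmB' x hx)
    obtain ⟨Q, hQG, hQm⟩ := pathOfList G (mA ++ mB) hnodup hlen hvrt hchain
    have hhead : (mA ++ mB).head? = some a := by
      rw [List.head?_append_of_ne_nil mA hmAne]; exact hhA
    have hlast : (mA ++ mB).getLast? = some b := by
      rw [List.getLast?_append_of_ne_nil mA hmBne]; exact hlB
    have hinf : [a₀, b₀] <:+: mA ++ mB := by
      refine ⟨mA.dropLast, mB.tail, ?_⟩
      conv_rhs => rw [← List.dropLast_append_getLast? a₀ hlA, ← List.cons_head?_tail hhB]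
      simp
    refine ⟨Q, hQG, ⟨⟨mA ++ mB, hQm⟩, ?_, a₀, b₀, ha₀, hb₀,
      (hQm.2.2.2 a₀ b₀).mpr (Or.inl hinf), ?_⟩, mA ++ mB, hQm, Or.inl ⟨hhead, hlast⟩⟩
    · rw [hQm.2.2.1]
      intro x hx
      rcases List.mem_append.mp hx with hx | hx
      · exact Or.inl (hmA' x hx)
      · exact Or.inr (hmB' x hx)
    · intro x y hxy hxA hyB
      rcases (hQm.2.2.2 x y).mp hxy with hin | hin
      · rcases pair_infix_append mA mB hin with h' | h' | ⟨e1, e2⟩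
        · exact absurd hyB (Set.disjoint_left.mp hd (hmA' y (h'.subset (by simp))))
        · exact absurd (hmB' x (h'.subset (by simp))) (Set.disjoint_left.mp hd hxA)
        · constructor
          · have := e1.symm.trans hlA
            exact Option.some.injEq _ _ ▸ this
          · have := e2.symm.trans hhB
            exact Option.some.injEq _ _ ▸ this
      · exfalso
        rcases pair_infix_append mA mB hin with h' | h' | ⟨e1, e2⟩
        · exact absurd hyB (Set.disjoint_left.mp hd (hmA' y (h'.subset (by simp))))
        · exact absurd (hmB' x (h'.subset (by simp))) (Set.disjoint_left.mp hd hxA)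
        · have hy : y = a₀ := by
            have := e1.symm.trans hlA
            exact Option.some.injEq _ _ ▸ this
          exact absurd hyB (Set.disjoint_left.mp hd (hy ▸ ha₀))
end

section
/- Let G be a graph, A and B disjoint nonempty subsets of V(G), and let {G_i : i ∈ I} be the set of all connected components of G. Then G is the union of all be-paths of A and B contained in G (i.e., G is a path-bipartite graph of A and B) if and only if V(G) = A ∪ B and for every i ∈ I both A ∩ V(G_i) ≠ ∅ and B ∩ V(G_i) ≠ ∅. -/
open SimpleGraph Set

section AuxStmt8

variable {V : Type}

/-- The path graph on the list `l`. -/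
def pathGr (l : List V) : Gr V where
  verts := {v | v ∈ l}
  Adj x y := x ≠ y ∧ ([x, y] <:+: l ∨ [y, x] <:+: l)
  adj_sub h := by simpa using h.1
  edge_vert h := by
    rcases h.2 with h' | h'
    · exact h'.subset (by simp)
    · exact h'.subset (by simp)
  symm := ⟨fun x y h => ⟨h.1.symm, h.2.symm⟩⟩

lemma pathGr_verts (l : List V) : (pathGr l).verts = {v | v ∈ l} := rfl

lemma pathGr_adj {l : List V} {x y : V} :
    (pathGr l).Adj x y ↔ x ≠ y ∧ ([x, y] <:+: l ∨ [y, x] <:+: l) := Iff.rfl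

lemma isPathGraphOn_pathGr {l : List V} (hn : l.Nodup) (hl : 2 ≤ l.length) :
    IsPathGraphOn l (pathGr l) := by
  refine ⟨hn, hl, rfl, fun x y => ⟨fun h => h.2, fun h => ⟨?_, h⟩⟩⟩
  rcases h with h | h
  · have := h.sublist.nodup hn
    simpa using this
  · have := h.sublist.nodup hn
    have : y ≠ x := by simpa using this
    exact this.symm

lemma pathGr_le {H : Gr V} {l : List V} (hch : List.Chain' H.Adj l)
    (hm : ∀ v ∈ l, v ∈ H.verts) : pathGr l ≤ H := by
  constructor
  · exact fun v hv => hm v hv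
  · rintro x y ⟨-, h | h⟩
    · exact List.isChain_pair.mp (hch.infix h)
    · exact (List.isChain_pair.mp (hch.infix h)).symm

lemma chain'_of_infix_adj {R : V → V → Prop} :
    ∀ l : List V, (∀ x y, [x, y] <:+: l → R x y) → List.Chain' R l
  | [], _ => List.isChain_nil
  | [_], _ => List.isChain_singleton _
  | a :: b :: t, h => by
      change List.IsChain _ _
      rw [List.isChain_cons_cons]
      refine ⟨h a b ⟨[], t, rfl⟩, chain'_of_infix_adj (b :: t) fun x y hxy => h x y ?_⟩
      exact hxy.trans (List.infix_cons (List.infix_refl _))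

lemma chain'_of_isPathGraphOn {l : List V} {P : Gr V} (h : IsPathGraphOn l P) :
    List.Chain' P.Adj l :=
  chain'_of_infix_adj l fun x y hxy => (h.2.2.2 x y).mpr (Or.inl hxy)

lemma reach_of_chain_s8 {H : Gr V} :
    ∀ (l : List V) (x : V), List.Chain' H.Adj (x :: l) → (∀ v ∈ x :: l, v ∈ H.verts) →
      ∀ y ∈ x :: l, ∀ (hx : x ∈ H.verts) (hy : y ∈ H.verts),
        H.coe.Reachable ⟨x, hx⟩ ⟨y, hy⟩
  | [], x, _, _, y, hy, hx, hy' => by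
      rcases List.mem_singleton.mp hy with rfl
      rfl
  | z :: t, x, hch, hm, y, hy, hx, hy' => by
      rcases List.mem_cons.mp hy with rfl | hy2
      · rfl
      · have hadj : H.Adj x z := (List.isChain_cons_cons.mp hch).1
        have hz : z ∈ H.verts := hm z (by simp)
        have r1 : H.coe.Reachable ⟨x, hx⟩ ⟨z, hz⟩ :=
          SimpleGraph.Adj.reachable (by simpa using hadj)
        exact r1.trans (reach_of_chain_s8 t z (List.isChain_cons_cons.mp hch).2
          (fun v hv => hm v (by simp [hv])) y hy2 hz hy')

lemma reach_all {H : Gr V} {l : List V} (hch : List.Chain' H.Adj l)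
    (hm : ∀ v ∈ l, v ∈ H.verts) {u v : V} (hu : u ∈ l) (hv : v ∈ l)
    (hu' : u ∈ H.verts) (hv' : v ∈ H.verts) : H.coe.Reachable ⟨u, hu'⟩ ⟨v, hv'⟩ := by
  cases l with
  | nil => simp at hu
  | cons x t =>
    have hx : x ∈ H.verts := hm x (by simp)
    exact (reach_of_chain_s8 t x hch hm u hu hx hu').symm.trans
      (reach_of_chain_s8 t x hch hm v hv hx hv')

lemma exists_pathFrom_of_reachable {H : Gr V} {u v : V} (hu : u ∈ H.verts) (hv : v ∈ H.verts)
    (hne : u ≠ v) (h : H.coe.Reachable ⟨u, hu⟩ ⟨v, hv⟩) : ∃ P, P ≤ H ∧ IsPathFrom P u v := by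
  classical
  obtain ⟨w⟩ := h
  set p : H.coe.Walk ⟨u, hu⟩ ⟨v, hv⟩ := w.toPath.1 with hp
  have hpath : p.IsPath := w.toPath.2
  set l : List V := p.support.map Subtype.val with hl
  have hnd : l.Nodup := hpath.support_nodup.map Subtype.val_injective
  have hsupne : p.support ≠ [] := p.support_ne_nil
  have hhead : l.head? = some u := by rw [hl, p.support_eq_cons]; rfl
  have hlast : l.getLast? = some v := by
    rw [hl, List.getLast?_map, List.getLast?_eq_getLast hsupne,
      SimpleGraph.Walk.getLast_support]
    rfl
  have hmem : ∀ z ∈ l, z ∈ H.verts := by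
    rintro z hz
    rw [hl] at hz
    obtain ⟨⟨z', hz'⟩, _, rfl⟩ := List.mem_map.mp hz
    exact hz'
  have hlen : 2 ≤ l.length := by
    rw [hl, List.length_map, SimpleGraph.Walk.length_support]
    by_contra hcon
    have : p.length = 0 := by omega
    have := SimpleGraph.Walk.eq_of_length_eq_zero this
    exact hne (by simpa [Subtype.ext_iff] using this)
  have hch : List.Chain' H.Adj l :=
    List.isChain_map_of_isChain _ (fun a b hab => by simpa using hab) p.isChain_adj_support
  exact ⟨pathGr l, pathGr_le hch hmem,
    l, isPathGraphOn_pathGr hnd hlen, Or.inl ⟨hhead, hlast⟩⟩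

lemma connectedGr_iff {H : Gr V} : ConnectedGr H ↔
    ∀ u v (hu : u ∈ H.verts) (hv : v ∈ H.verts), H.coe.Reachable ⟨u, hu⟩ ⟨v, hv⟩ := by
  constructor
  · intro hc u v hu hv
    by_cases hne : u = v
    · subst hne; rfl
    · obtain ⟨P, hle, lP, hlP, hend⟩ := hc u v hu hv hne
      have hch : List.Chain' H.Adj lP :=
        (chain'_of_isPathGraphOn hlP).imp fun a b hab => hle.2 hab
      have hm : ∀ z ∈ lP, z ∈ H.verts := fun z hz => hle.1 (by rw [hlP.2.2.1]; exact hz)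
      have hu' : u ∈ lP := by
        rcases hend with ⟨h1, h2⟩ | ⟨h1, h2⟩
        · exact List.mem_of_mem_head? h1
        · exact List.mem_of_mem_getLast? h2
      have hv' : v ∈ lP := by
        rcases hend with ⟨h1, h2⟩ | ⟨h1, h2⟩
        · exact List.mem_of_mem_getLast? h2
        · exact List.mem_of_mem_head? h1
      exact reach_all hch hm hu' hv' hu hv
  · intro hr u v hu hv hne
    exact exists_pathFrom_of_reachable hu hv hne (hr u v hu hv)

lemma connectedGr_sup {H P : Gr V} (hH : ConnectedGr H) (hP : ConnectedGr P)
    {v₀ : V} (hv₀H : v₀ ∈ H.verts) (hv₀P : v₀ ∈ P.verts) : ConnectedGr (H ⊔ P) := by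
  rw [connectedGr_iff] at hH hP ⊢
  have hv₀ : v₀ ∈ (H ⊔ P).verts := Set.mem_union_left _ hv₀H
  have key : ∀ w (hw : w ∈ (H ⊔ P).verts), (H ⊔ P).coe.Reachable ⟨w, hw⟩ ⟨v₀, hv₀⟩ := by
    intro w hw
    rcases hw with hwH | hwP
    · exact (hH w v₀ hwH hv₀H).map (SimpleGraph.Subgraph.inclusion le_sup_left)
    · exact (hP w v₀ hwP hv₀P).map (SimpleGraph.Subgraph.inclusion le_sup_right)
  exact fun u v hu hv => (key u hu).trans (key v hv).symm

lemma exists_component_s8 {G H₀ : Gr V} (h0 : H₀ ≤ G) (hc : ConnectedGr H₀) :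
    ∃ H, IsComponent G H ∧ H₀ ≤ H := by
  have ih : ∀ c ⊆ {Γ : Gr V | Γ ≤ G ∧ ConnectedGr Γ}, IsChain (· ≤ ·) c → ∀ y ∈ c,
      ∃ ub ∈ {Γ : Gr V | Γ ≤ G ∧ ConnectedGr Γ}, ∀ z ∈ c, z ≤ ub := by
    intro c hsub hchain y hy
    refine ⟨sSup c, ⟨sSup_le fun Γ hΓ => (hsub hΓ).1, ?_⟩, fun z hz => le_sSup hz⟩
    intro u v hu hv hne
    rw [SimpleGraph.Subgraph.verts_sSup] at hu hv
    simp only [Set.mem_iUnion] at hu hv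
    obtain ⟨Γu, hΓu, huu⟩ := hu
    obtain ⟨Γv, hΓv, hvv⟩ := hv
    rcases hchain.total hΓu hΓv with hle | hle
    · obtain ⟨P, hP, hfrom⟩ := (hsub hΓv).2 u v (hle.1 huu) hvv hne
      exact ⟨P, hP.trans (le_sSup hΓv), hfrom⟩
    · obtain ⟨P, hP, hfrom⟩ := (hsub hΓu).2 u v huu (hle.1 hvv) hne
      exact ⟨P, hP.trans (le_sSup hΓu), hfrom⟩
  obtain ⟨m, hm0, hms⟩ := zorn_le_nonempty₀ _ ih H₀ ⟨h0, hc⟩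
  exact ⟨m, ⟨hms.1.1, hms.1.2, fun Γ hΓG hΓc hmΓ =>
    le_antisymm hmΓ (hms.2 ⟨hΓG, hΓc⟩ hmΓ)⟩, hm0⟩

lemma connectedGr_singleton (v : V) :
    ConnectedGr (SimpleGraph.singletonSubgraph ⊤ v) := by
  intro u w hu hw hne
  rw [SimpleGraph.singletonSubgraph_verts, Set.mem_singleton_iff] at hu hw
  exact absurd (hu.trans hw.symm) hne

lemma trunc {B : Set V} : ∀ l : List V, (∃ z ∈ l, z ∈ B) →
    ∃ m b₀, (m ++ [b₀]) <+: l ∧ (∀ z ∈ m, z ∉ B) ∧ b₀ ∈ B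
  | [], h => by simp at h
  | x :: t, h => by
    classical
    by_cases hx : x ∈ B
    · exact ⟨[], x, ⟨t, rfl⟩, by simp, hx⟩
    · have ht : ∃ z ∈ t, z ∈ B := by
        obtain ⟨z, hz, hzB⟩ := h
        rcases List.mem_cons.mp hz with rfl | hz'
        · exact absurd hzB hx
        · exact ⟨z, hz', hzB⟩
      obtain ⟨m, b₀, hpre, hm, hb⟩ := trunc t ht
      obtain ⟨t', ht'⟩ := hpre
      refine ⟨x :: m, b₀, ⟨t', by simp [ht']⟩, ?_, hb⟩
      rintro z hz
      rcases List.mem_cons.mp hz with rfl | hz'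
      · exact hx
      · exact hm z hz'

lemma snoc_inj {s m : List V} {x y : V} (h : s ++ [x] = m ++ [y]) : s = m ∧ x = y := by
  have hl : s.length = m.length := by
    have := congrArg List.length h; simp at this; omega
  have h2 := List.append_inj h hl
  refine ⟨h2.1, by simpa using congrArg (fun l => List.head? l) h2.2⟩

lemma bePath_build {G : Gr V} {A B : Set V} (hd : Disjoint A B)
    {m : List V} {b₀ : V} (hmne : m ≠ []) (hnd : (m ++ [b₀]).Nodup)
    (hch : List.Chain' G.Adj (m ++ [b₀])) (hmem : ∀ v ∈ m ++ [b₀], v ∈ G.verts)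
    (hmA : ∀ z ∈ m, z ∈ A) (hb : b₀ ∈ B) :
    pathGr (m ++ [b₀]) ≤ G ∧ IsBePath A B (pathGr (m ++ [b₀])) := by
  set l := m ++ [b₀] with hldef
  have hlen : 2 ≤ l.length := by
    have := List.length_pos_iff.mpr hmne
    rw [hldef]; simp; omega
  have hle : pathGr l ≤ G := pathGr_le hch hmem
  set a₀ := m.getLast hmne with ha₀def
  have ha₀A : a₀ ∈ A := hmA _ (List.getLast_mem hmne)
  have hm' : m = m.dropLast ++ [a₀] := (List.dropLast_append_getLast hmne).symm
  have hlalt : l = m.dropLast ++ [a₀, b₀] := by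
    rw [hldef]; conv_lhs => rw [hm']
    simp
  have hinf : [a₀, b₀] <:+: l := ⟨m.dropLast, [], by rw [hlalt]; simp⟩
  have hane : a₀ ≠ b₀ := hd.ne_of_mem ha₀A hb
  have hlast : l.getLast? = some b₀ := by rw [hldef]; exact List.getLast?_concat
  have hadj : (pathGr l).Adj a₀ b₀ := ⟨hane, Or.inl hinf⟩
  refine ⟨hle, ⟨l, isPathGraphOn_pathGr hnd hlen⟩, ?_, a₀, b₀, ha₀A, hb, hadj, ?_⟩
  · intro z hz
    rcases List.mem_append.mp hz with hz | hz
    · exact Or.inl (hmA z hz)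
    · rw [List.mem_singleton] at hz; subst hz; exact Or.inr hb
  · rintro x y ⟨hxy, hinf' | hinf'⟩ hx hy
    · -- [x, y] <:+: l
      obtain ⟨s, t, hst⟩ := hinf'
      have hyB : y ∉ m := fun hym => Set.disjoint_left.mp hd (hmA y hym) hy
      have hyl : y ∈ l := by rw [← hst]; simp
      have hyb : y = b₀ := by
        rcases List.mem_append.mp hyl with h' | h'
        · exact absurd h' hyB
        · simpa using h'
      subst hyb
      have ht : t = [] := by
        by_contra htne
        have h1 : l = (s ++ [x, y]) ++ t := by rw [← hst]
        have h3 : ((s ++ [x, y]) ++ t).getLast? = some y := by rw [← h1]; exact hlast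
        rw [List.getLast?_append, List.getLast?_eq_getLast htne] at h3
        simp only [Option.some_or] at h3
        have hyt : y ∈ t := (Option.some_inj.mp h3) ▸ List.getLast_mem htne
        have hnodis : ¬ (s ++ [x, y]).Disjoint t := fun hdis => hdis (by simp) hyt
        rw [h1, List.nodup_append] at hnd
        exact hnodis (fun a ha hb => hnd.2.2 a ha a hb rfl)
      subst ht
      have hsx : s ++ [x] = m := by
        have heq : (s ++ [x]) ++ [y] = m ++ [y] := by rw [← hldef, ← hst]; simp
        exact (snoc_inj heq).1
      refine ⟨?_, rfl⟩
      have hgl : m.getLast? = some a₀ := List.getLast?_eq_getLast hmne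
      rw [← hsx, List.getLast?_concat] at hgl
      exact Option.some_inj.mp hgl
    · -- [y, x] <:+: l
      obtain ⟨s, t, hst⟩ := hinf'
      have hyB : y ∉ m := fun hym => Set.disjoint_left.mp hd (hmA y hym) hy
      have hyl : y ∈ l := by rw [← hst]; simp
      have hyb : y = b₀ := by
        rcases List.mem_append.mp hyl with h' | h'
        · exact absurd h' hyB
        · simpa using h'
      subst hyb
      exfalso
      have h1 : l = (s ++ [y]) ++ (x :: t) := by rw [← hst]; simp
      have h3 : ((s ++ [y]) ++ (x :: t)).getLast? = some y := by rw [← h1]; exact hlast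
      rw [List.getLast?_append, List.getLast?_eq_getLast (l := x :: t) (by simp)] at h3
      simp only [Option.some_or] at h3
      have hyt : y ∈ x :: t := (Option.some_inj.mp h3) ▸ List.getLast_mem (by simp)
      have hnodis : ¬ (s ++ [y]).Disjoint (x :: t) := fun hdis => hdis (by simp) hyt
      rw [h1, List.nodup_append] at hnd
      exact hnodis (fun a ha hb => hnd.2.2 a ha a hb rfl)

lemma isBePath_swap {A B : Set V} {P : Gr V} (h : IsBePath B A P) : IsBePath A B P := by
  obtain ⟨hp, hsub, a₀, b₀, ha₀, hb₀, hadj, huniq⟩ := h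
  refine ⟨hp, by rwa [Set.union_comm], b₀, a₀, hb₀, ha₀, hadj.symm, ?_⟩
  intro x y hxy hx hy
  obtain ⟨h1, h2⟩ := huniq y x hxy.symm hy hx
  exact ⟨h2, h1⟩

lemma exists_bePath_through {G : Gr V} {A B : Set V} (hd : Disjoint A B)
    (hverts : G.verts ⊆ A ∪ B) {H : Gr V} (hHG : H ≤ G) (hHc : ConnectedGr H)
    {x b : V} (hx : x ∈ A) (hxH : x ∈ H.verts) (hbB : b ∈ B) (hbH : b ∈ H.verts) :
    ∃ m b₀, (∀ z ∈ m, z ∈ A) ∧ b₀ ∈ B ∧ m.head? = some x ∧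
      (m ++ [b₀]).Nodup ∧ List.Chain' G.Adj (m ++ [b₀]) ∧ (∀ v ∈ m ++ [b₀], v ∈ G.verts) ∧
      pathGr (m ++ [b₀]) ≤ G ∧ IsBePath A B (pathGr (m ++ [b₀])) := by
  have hxb : x ≠ b := hd.ne_of_mem hx hbB
  obtain ⟨P, hPH, l, hl, hend⟩ := hHc x b hxH hbH hxb
  have hPG : P ≤ G := hPH.trans hHG
  have hchl : List.Chain' G.Adj l := (chain'_of_isPathGraphOn hl).imp fun a b' hab => hPG.2 hab
  have hmeml : ∀ v ∈ l, v ∈ G.verts := fun v hv => hPG.1 (by rw [hl.2.2.1]; exact hv)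
  have hndl : l.Nodup := hl.1
  obtain ⟨l₀, hnd₀, hch₀, hmem₀, hhead₀, hbmem₀⟩ :
      ∃ l₀ : List V, l₀.Nodup ∧ List.Chain' G.Adj l₀ ∧ (∀ v ∈ l₀, v ∈ G.verts) ∧
        l₀.head? = some x ∧ b ∈ l₀ := by
    rcases hend with ⟨h1, h2⟩ | ⟨h1, h2⟩
    · exact ⟨l, hndl, hchl, hmeml, h1, List.mem_of_mem_getLast? h2⟩
    · refine ⟨l.reverse, List.nodup_reverse.mpr hndl, ?_,
        fun v hv => hmeml v (List.mem_reverse.mp hv),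
        by rw [List.head?_reverse]; exact h2, List.mem_reverse.mpr (List.mem_of_mem_head? h1)⟩
      change List.IsChain _ _
      rw [List.isChain_reverse]
      exact hchl.imp fun a b' hab => hab.symm
  obtain ⟨m, b₀, hpre, hmnB, hb₀⟩ := trunc l₀ ⟨b, hbmem₀, hbB⟩
  have hsubl := hpre.sublist
  have hmemmb : ∀ v ∈ m ++ [b₀], v ∈ G.verts := fun v hv => hmem₀ v (hsubl.subset hv)
  have hmA : ∀ z ∈ m, z ∈ A := by
    intro z hz
    have hzv : z ∈ G.verts := hmemmb z (List.mem_append_left _ hz)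
    rcases hverts hzv with h' | h'
    · exact h'
    · exact absurd h' (hmnB z hz)
  have hmne : m ≠ [] := by
    rintro rfl
    obtain ⟨t, ht⟩ := hpre
    rw [← ht] at hhead₀
    simp at hhead₀
    exact Set.disjoint_left.mp hd hx (hhead₀ ▸ hb₀)
  have hheadm : m.head? = some x := by
    obtain ⟨t, ht⟩ := hpre
    cases m with
    | nil => exact absurd rfl hmne
    | cons c cs =>
      rw [← ht] at hhead₀
      simp at hhead₀
      simp [hhead₀]
  have hndmb := hsubl.nodup hnd₀
  have hchmb := hch₀.prefix hpre
  obtain ⟨hle, hbe⟩ := bePath_build hd hmne hndmb hchmb hmemmb hmA hb₀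
  exact ⟨m, b₀, hmA, hb₀, hheadm, hndmb, hchmb, hmemmb, hle, hbe⟩

lemma vert_case {G : Gr V} {A B : Set V} (hd : Disjoint A B) (hverts : G.verts ⊆ A ∪ B)
    (hcomp : ∀ H, IsComponent G H → (B ∩ H.verts).Nonempty)
    {v : V} (hvA : v ∈ A) (hvG : v ∈ G.verts) :
    ∃ P, P ≤ G ∧ IsBePath A B P ∧ v ∈ P.verts := by
  have hsin : SimpleGraph.singletonSubgraph ⊤ v ≤ G :=
    (SimpleGraph.singletonSubgraph_le_iff v G).mpr hvG
  obtain ⟨H, hH, hleH⟩ := exists_component_s8 hsin (connectedGr_singleton v)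
  have hvH : v ∈ H.verts := hleH.1 rfl
  obtain ⟨b, hbB, hbH⟩ := hcomp H hH
  obtain ⟨m, b₀, hmA, hb₀, hheadm, _, _, _, hle, hbe⟩ :=
    exists_bePath_through hd hverts hH.1 hH.2.1 hvA hvH hbB hbH
  exact ⟨_, hle, hbe,
    List.mem_append_left _ (List.mem_of_mem_head? hheadm)⟩

lemma edge_case {G : Gr V} {A B : Set V} (hd : Disjoint A B) (hverts : G.verts ⊆ A ∪ B)
    (hcomp : ∀ H, IsComponent G H → (B ∩ H.verts).Nonempty)
    {x y : V} (hxy : G.Adj x y) (hx : x ∈ A) (hy : y ∈ A) :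
    ∃ P, P ≤ G ∧ IsBePath A B P ∧ P.Adj x y := by
  have hne : x ≠ y := by have := G.adj_sub hxy; simpa using this
  have hxG : x ∈ G.verts := G.edge_vert hxy
  have hyG : y ∈ G.verts := G.edge_vert hxy.symm
  have hch2 : List.Chain' G.Adj [x, y] := List.isChain_pair.mpr hxy
  have hE : pathGr [x, y] ≤ G := by
    refine pathGr_le hch2 ?_
    intro z hz
    simp at hz
    rcases hz with rfl | rfl
    · exact hxG
    · exact hyG
  have hEc : ConnectedGr (pathGr [x, y]) := by
    rw [connectedGr_iff]
    intro u w hu hw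
    have hchp : List.Chain' (pathGr [x, y]).Adj [x, y] :=
      List.isChain_pair.mpr ⟨hne, Or.inl (List.infix_refl _)⟩
    exact reach_all hchp (fun z hz => hz) hu hw hu hw
  obtain ⟨H, hH, hleE⟩ := exists_component_s8 hE hEc
  have hxH : x ∈ H.verts := hleE.1 (by simp [pathGr_verts])
  have hyH : y ∈ H.verts := hleE.1 (by simp [pathGr_verts])
  obtain ⟨b, hbB, hbH⟩ := hcomp H hH
  obtain ⟨m, b₀, hmA, hb₀, hheadm, hnd, hch, hmem, hle, hbe⟩ :=
    exists_bePath_through hd hverts hH.1 hH.2.1 hx hxH hbB hbH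
  obtain ⟨mt, rfl⟩ : ∃ mt, m = x :: mt := by
    cases m with
    | nil => simp at hheadm
    | cons c cs =>
      refine ⟨cs, ?_⟩
      simp at hheadm
      simp [hheadm]
  by_cases hyl : y ∈ mt
  · obtain ⟨s, t, rfl⟩ := List.append_of_mem hyl
    have hsplit : (x :: (s ++ y :: t)) ++ [b₀] = (x :: s) ++ ((y :: t) ++ [b₀]) := by simp
    have hsuf : List.Sublist ((y :: t) ++ [b₀]) ((x :: (s ++ y :: t)) ++ [b₀]) := by
      rw [hsplit]; exact List.sublist_append_right _ _
    have hndt : ((y :: t) ++ [b₀]).Nodup := hsuf.nodup hnd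
    have hnd' : x ∉ (s ++ y :: t) ++ [b₀] ∧ ((s ++ y :: t) ++ [b₀]).Nodup := by
      rw [show (x :: (s ++ y :: t)) ++ [b₀] = x :: ((s ++ y :: t) ++ [b₀]) from rfl,
        List.nodup_cons] at hnd
      exact hnd
    have hxnot : x ∉ (y :: t) ++ [b₀] := by
      intro hmem'
      apply hnd'.1
      rcases List.mem_append.mp hmem' with h' | h'
      · exact List.mem_append_left _ (List.mem_append_right _ h')
      · exact List.mem_append_right _ h'
    have hndl₂ : ((x :: y :: t) ++ [b₀]).Nodup := by
      rw [show (x :: y :: t) ++ [b₀] = x :: ((y :: t) ++ [b₀]) from rfl, List.nodup_cons]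
      exact ⟨hxnot, hndt⟩
    have hsuffix : ((y :: t) ++ [b₀]) <:+ (x :: (s ++ y :: t)) ++ [b₀] := ⟨x :: s, by simp⟩
    have hcht : List.Chain' G.Adj ((y :: t) ++ [b₀]) := hch.suffix hsuffix
    have hchl₂ : List.Chain' G.Adj ((x :: y :: t) ++ [b₀]) := by
      rw [show (x :: y :: t) ++ [b₀] = x :: (y :: (t ++ [b₀])) from by simp]; change List.IsChain _ _; rw [List.isChain_cons_cons]
      exact ⟨hxy, hcht⟩
    have hmeml₂ : ∀ v ∈ (x :: y :: t) ++ [b₀], v ∈ G.verts := by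
      intro v hv
      apply hmem
      simp at hv ⊢
      tauto
    have hm₂A : ∀ z ∈ x :: y :: t, z ∈ A := by
      intro z hz
      rcases List.mem_cons.mp hz with rfl | hz'
      · exact hx
      rcases List.mem_cons.mp hz' with rfl | hz''
      · exact hy
      · exact hmA z (by simp [hz''])
    obtain ⟨hle₂, hbe₂⟩ := bePath_build hd (by simp) hndl₂ hchl₂ hmeml₂ hm₂A hb₀
    exact ⟨_, hle₂, hbe₂, ⟨hne, Or.inl ⟨[], t ++ [b₀], by simp⟩⟩⟩
  · have hynotm : y ∉ (x :: mt) ++ [b₀] := by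
      intro hmem'
      rcases List.mem_append.mp hmem' with h' | h'
      · rcases List.mem_cons.mp h' with rfl | h''
        · exact hne rfl
        · exact hyl h''
      · have hyb : y = b₀ := by simpa using h'
        exact Set.disjoint_left.mp hd hy (hyb ▸ hb₀)
    have hndl₂ : ((y :: x :: mt) ++ [b₀]).Nodup := by
      rw [show (y :: x :: mt) ++ [b₀] = y :: ((x :: mt) ++ [b₀]) from rfl, List.nodup_cons]
      exact ⟨hynotm, hnd⟩
    have hchl₂ : List.Chain' G.Adj ((y :: x :: mt) ++ [b₀]) := by
      rw [show (y :: x :: mt) ++ [b₀] = y :: (x :: (mt ++ [b₀])) from by simp]; change List.IsChain _ _; rw [List.isChain_cons_cons]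
      exact ⟨hxy.symm, hch⟩
    have hmeml₂ : ∀ v ∈ (y :: x :: mt) ++ [b₀], v ∈ G.verts := by
      intro v hv
      rcases List.mem_cons.mp (by simpa using hv : v ∈ y :: ((x :: mt) ++ [b₀])) with rfl | hv'
      · exact hyG
      · exact hmem v hv'
    have hm₂A : ∀ z ∈ y :: x :: mt, z ∈ A := by
      intro z hz
      rcases List.mem_cons.mp hz with rfl | hz'
      · exact hy
      · exact hmA z hz'
    obtain ⟨hle₂, hbe₂⟩ := bePath_build hd (by simp) hndl₂ hchl₂ hmeml₂ hm₂A hb₀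
    exact ⟨_, hle₂, hbe₂, ⟨hne, Or.inr ⟨[], mt ++ [b₀], by simp⟩⟩⟩


end AuxStmt8

theorem stmt8 {V : Type} (G : Gr V) (A B : Set V) (hA : A.Nonempty) (hB : B.Nonempty)
    (hd : Disjoint A B) (hAv : A ⊆ G.verts) (hBv : B ⊆ G.verts) :
    IsPathBipartite A B G ↔
      (G.verts = A ∪ B ∧
        ∀ H, IsComponent G H → (A ∩ H.verts).Nonempty ∧ (B ∩ H.verts).Nonempty) := by
  constructor
  · rintro ⟨-, -, -, -, -, Ps, -, hbe, rfl⟩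
    have hvertseq : (sSup Ps).verts = A ∪ B := by
      apply le_antisymm
      · rw [SimpleGraph.Subgraph.verts_sSup]
        exact Set.iUnion₂_subset fun P hP => (hbe P hP).2.1
      · exact Set.union_subset hAv hBv
    refine ⟨hvertseq, fun H hH => ?_⟩
    have hvne : H.verts.Nonempty := by
      by_contra hcon
      rw [Set.not_nonempty_iff_eq_empty] at hcon
      obtain ⟨a, ha⟩ := hA
      have hsin : SimpleGraph.singletonSubgraph ⊤ a ≤ sSup Ps :=
        (SimpleGraph.singletonSubgraph_le_iff a _).mpr (hAv ha)
      have hHs : H ≤ SimpleGraph.singletonSubgraph ⊤ a := by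
        constructor
        · rw [hcon]; exact Set.empty_subset _
        · intro p q hpq
          exact absurd (H.edge_vert hpq) (by rw [hcon]; exact Set.notMem_empty p)
      have hEq := hH.2.2 _ hsin (connectedGr_singleton a) hHs
      have ha' : a ∈ H.verts := by rw [hEq]; exact rfl
      rw [hcon] at ha'
      exact ha'
    obtain ⟨v, hvH⟩ := hvne
    have hvG : v ∈ (sSup Ps).verts := hH.1.1 hvH
    rw [SimpleGraph.Subgraph.verts_sSup] at hvG
    simp only [Set.mem_iUnion] at hvG
    obtain ⟨P, hPmem, hvP⟩ := hvG
    obtain ⟨⟨lP, hlP⟩, hsub, a₀, b₀, ha₀, hb₀, hadj, -⟩ := hbe P hPmem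
    have hPc : ConnectedGr P := by
      rw [connectedGr_iff]
      intro u w hu hw
      exact reach_all (chain'_of_isPathGraphOn hlP)
        (fun z hz => by rw [hlP.2.2.1]; exact hz) (by rw [hlP.2.2.1] at hu; exact hu)
        (by rw [hlP.2.2.1] at hw; exact hw) hu hw
    have hsup : H = H ⊔ P := hH.2.2 (H ⊔ P) (sup_le hH.1 (le_sSup hPmem))
      (connectedGr_sup hH.2.1 hPc hvH hvP) le_sup_left
    have hPle : P ≤ H := by rw [hsup]; exact le_sup_right
    exact ⟨⟨a₀, ha₀, hPle.1 (P.edge_vert hadj)⟩, ⟨b₀, hb₀, hPle.1 (P.edge_vert hadj.symm)⟩⟩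
  · rintro ⟨hveq, hcomp⟩
    have hvsub : G.verts ⊆ A ∪ B := hveq.le
    have hcompB : ∀ H, IsComponent G H → (B ∩ H.verts).Nonempty := fun H hH => (hcomp H hH).2
    have hcompA : ∀ H, IsComponent G H → (A ∩ H.verts).Nonempty := fun H hH => (hcomp H hH).1
    set Ps : Set (Gr V) := {P | P ≤ G ∧ IsBePath A B P} with hPs
    have hvcov : ∀ v ∈ G.verts, ∃ P ∈ Ps, v ∈ P.verts := by
      intro v hv
      rcases hvsub hv with hvA | hvB
      · obtain ⟨P, h1, h2, h3⟩ := vert_case hd hvsub hcompB hvA hv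
        exact ⟨P, ⟨h1, h2⟩, h3⟩
      · obtain ⟨P, h1, h2, h3⟩ :=
          vert_case hd.symm (by rw [Set.union_comm]; exact hvsub) hcompA hvB hv
        exact ⟨P, ⟨h1, isBePath_swap h2⟩, h3⟩
    have hecov : ∀ p q, G.Adj p q → ∃ P ∈ Ps, P.Adj p q := by
      intro p q hpq
      have hpv := hvsub (G.edge_vert hpq)
      have hqv := hvsub (G.edge_vert hpq.symm)
      have hpqne : p ≠ q := by have := G.adj_sub hpq; simpa using this
      have hpG : p ∈ G.verts := G.edge_vert hpq
      have hqG : q ∈ G.verts := G.edge_vert hpq.symm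
      rcases hpv with hpA | hpB <;> rcases hqv with hqA | hqB
      · obtain ⟨P, h1, h2, h3⟩ := edge_case hd hvsub hcompB hpq hpA hqA
        exact ⟨P, ⟨h1, h2⟩, h3⟩
      · have hch2 : List.Chain' G.Adj ([p] ++ [q]) := List.isChain_pair.mpr hpq
        have hnd2 : ([p] ++ [q]).Nodup := by simp [hpqne]
        have hmem2 : ∀ z ∈ [p] ++ [q], z ∈ G.verts := by
          intro z hz
          simp at hz
          rcases hz with rfl | rfl
          · exact hpG
          · exact hqG
        obtain ⟨hle2, hbe2⟩ := bePath_build hd (by simp) hnd2 hch2 hmem2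
          (by intro z hz; simp at hz; subst hz; exact hpA) hqB
        exact ⟨_, ⟨hle2, hbe2⟩, ⟨hpqne, Or.inl ⟨[], [], by simp⟩⟩⟩
      · have hch2 : List.Chain' G.Adj ([q] ++ [p]) := List.isChain_pair.mpr hpq.symm
        have hnd2 : ([q] ++ [p]).Nodup := by simp [hpqne.symm]
        have hmem2 : ∀ z ∈ [q] ++ [p], z ∈ G.verts := by
          intro z hz
          simp at hz
          rcases hz with rfl | rfl
          · exact hqG
          · exact hpG
        obtain ⟨hle2, hbe2⟩ := bePath_build hd (by simp) hnd2 hch2 hmem2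
          (by intro z hz; simp at hz; subst hz; exact hqA) hpB
        exact ⟨_, ⟨hle2, hbe2⟩, ⟨hpqne, Or.inr ⟨[], [], by simp⟩⟩⟩
      · obtain ⟨P, h1, h2, h3⟩ :=
          edge_case hd.symm (by rw [Set.union_comm]; exact hvsub) hcompA hpq hpB hqB
        exact ⟨P, ⟨h1, isBePath_swap h2⟩, h3⟩
    have hPsne : Ps.Nonempty := by
      obtain ⟨a, ha⟩ := hA
      obtain ⟨P, hP, -⟩ := hvcov a (hAv ha)
      exact ⟨P, hP⟩
    refine ⟨hA, hB, hd, hAv, hBv, Ps, hPsne, fun P hP => hP.2, ?_⟩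
    apply le_antisymm
    · constructor
      · intro v hv
        rw [SimpleGraph.Subgraph.verts_sSup]
        obtain ⟨P, hP, hvP⟩ := hvcov v hv
        exact Set.mem_biUnion hP hvP
      · intro p q hpq
        rw [SimpleGraph.Subgraph.sSup_adj]
        obtain ⟨P, hP, h⟩ := hecov p q hpq
        exact ⟨P, hP, h⟩
    · exact sSup_le fun P hP => hP.1
end
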